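/- Let g : Ω → ℝ be measurable with g ≤ 0 on a finite measure space (Ω, μ), and let h : Ω → [0, δ₁] be measurable with A := ∫ h dμ > 0 and ∫_Ω g dμ ≥ −c₁. Then ∫_Ω e^{g} h dμ ≥ A·exp(−δ₁ c₁ / A). -/

import Mathlib

/-!
With `A = ∫ h dμ`, the measure `h dμ / A` is a probability measure, so Jensen's inequality for
`exp` gives `∫ e^g h dμ ≥ A exp ((∫ g h dμ) / A)`. Since `g ≤ 0` and `h ≤ δ₁`, we have
`g h ≥ δ₁ g` pointwise, hence `∫ g h dμ ≥ δ₁ ∫ g dμ ≥ -δ₁ c₁`, and `exp` is monotone.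
-/

open MeasureTheory Real

lemma Real.exp_mul_sub_add_one_le (m t : ℝ) : exp m * (t - m + 1) ≤ exp t :=
  calc exp m * (t - m + 1) ≤ exp m * exp (t - m) := by gcongr; exact add_one_le_exp _
    _ = exp t := by rw [← exp_add, add_sub_cancel]

section

variable {Ω : Type*} [MeasurableSpace Ω] {μ : Measure Ω} {g h : Ω → ℝ}

/-- Jensen for `exp` and the weight `h dμ`, obtained by integrating the tangent line of `exp` at
the weighted mean `m = (∫ g h dμ) / ∫ h dμ`. -/
theorem integral_mul_exp_integral_div_le_integral_exp_mul (hh0 : ∀ᵐ x ∂μ, 0 ≤ h x)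
    (hh : Integrable h μ) (hgh : Integrable (fun x ↦ g x * h x) μ)
    (hexp : Integrable (fun x ↦ exp (g x) * h x) μ) (hA : ∫ x, h x ∂μ ≠ 0) :
    (∫ x, h x ∂μ) * exp ((∫ x, g x * h x ∂μ) / ∫ x, h x ∂μ) ≤ ∫ x, exp (g x) * h x ∂μ := by
  set A := ∫ x, h x ∂μ
  set m := (∫ x, g x * h x ∂μ) / A
  have hsplit : ∀ x, exp m * ((g x - m + 1) * h x) = exp m * (g x * h x + (1 - m) * h x) :=
    fun x ↦ by ring
  have htangent_int : Integrable (fun x ↦ exp m * ((g x - m + 1) * h x)) μ := by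
    simp_rw [hsplit]
    exact (hgh.add (hh.const_mul _)).const_mul _
  have htangent_eq : ∫ x, exp m * ((g x - m + 1) * h x) ∂μ = A * exp m := by
    simp_rw [hsplit]
    rw [integral_const_mul, integral_add hgh (hh.const_mul _), integral_const_mul]
    have hmA : m * A = ∫ x, g x * h x ∂μ := div_mul_cancel₀ _ hA
    rw [← hmA]
    ring
  rw [← htangent_eq]
  refine integral_mono_ae htangent_int hexp (hh0.mono fun x hx ↦ ?_)
  dsimp only
  rw [← mul_assoc]
  exact mul_le_mul_of_nonneg_right (exp_mul_sub_add_one_le m (g x)) hx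

theorem const_mul_integral_le_integral_mul {c : ℝ} (hg : Integrable g μ)
    (hgh : Integrable (fun x ↦ g x * h x) μ) (hg0 : ∀ᵐ x ∂μ, g x ≤ 0) (hhc : ∀ᵐ x ∂μ, h x ≤ c) :
    c * ∫ x, g x ∂μ ≤ ∫ x, g x * h x ∂μ := by
  rw [← integral_const_mul]
  refine integral_mono_ae (hg.const_mul c) hgh ?_
  filter_upwards [hg0, hhc] with x hgx hhx
  exact (mul_comm c (g x)).trans_le (mul_le_mul_of_nonpos_left hhx hgx)

end

/-- The chain of inequalities (3.9): for `g ≤ 0`, `0 ≤ h ≤ δ₁`, `A = ∫ h dμ > 0`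
and `∫ g dμ ≥ −c₁`, one has `∫ e^g h dμ ≥ A·exp(−δ₁ c₁ / A)`. -/
theorem jensen_capacity_bound {Ω : Type*} [MeasurableSpace Ω] (μ : Measure Ω)
    [IsFiniteMeasure μ] (δ₁ c₁ : ℝ) (hδ₁ : 0 < δ₁)
    (g h : Ω → ℝ) (hg : Integrable g μ) (hgle : ∀ x, g x ≤ 0)
    (hh : Measurable h) (hh0 : ∀ x, 0 ≤ h x) (hh1 : ∀ x, h x ≤ δ₁)
    (hA : 0 < ∫ x, h x ∂μ) (hc₁ : -c₁ ≤ ∫ x, g x ∂μ) :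
    (∫ x, h x ∂μ) * Real.exp (-(δ₁ * c₁) / ∫ x, h x ∂μ)
      ≤ ∫ x, Real.exp (g x) * h x ∂μ := by
  have hh_norm : ∀ᵐ x ∂μ, ‖h x‖ ≤ δ₁ :=
    ae_of_all _ fun x ↦ by rw [norm_of_nonneg (hh0 x)]; exact hh1 x
  have hexp_norm : ∀ᵐ x ∂μ, ‖exp (g x)‖ ≤ 1 :=
    ae_of_all _ fun x ↦ by rw [norm_of_nonneg (exp_pos _).le]; exact exp_le_one_iff.mpr (hgle x)
  have hh_int : Integrable h μ := .of_bound hh.aestronglyMeasurable δ₁ hh_norm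
  have hgh_int : Integrable (fun x ↦ g x * h x) μ := hg.mul_bdd hh.aestronglyMeasurable hh_norm
  have hexp_int : Integrable (fun x ↦ exp (g x) * h x) μ :=
    hh_int.bdd_mul (continuous_exp.comp_aestronglyMeasurable hg.aestronglyMeasurable) hexp_norm
  have hgh : -(δ₁ * c₁) ≤ ∫ x, g x * h x ∂μ :=
    calc -(δ₁ * c₁) = δ₁ * -c₁ := by ring
      _ ≤ δ₁ * ∫ x, g x ∂μ := by gcongr
      _ ≤ ∫ x, g x * h x ∂μ := const_mul_integral_le_integral_mul hg hgh_int
          (ae_of_all _ hgle) (ae_of_all _ hh1)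
  calc (∫ x, h x ∂μ) * exp (-(δ₁ * c₁) / ∫ x, h x ∂μ)
      ≤ (∫ x, h x ∂μ) * exp ((∫ x, g x * h x ∂μ) / ∫ x, h x ∂μ) := by gcongr
    _ ≤ ∫ x, exp (g x) * h x ∂μ := integral_mul_exp_integral_div_le_integral_exp_mul
          (ae_of_all _ hh0) hh_int hgh_int hexp_int hA.ne'
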